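/- arXiv:1703.06285 — 5 statements merged into one kernel-verified Lean document; each statement's English description precedes it below -/
import Mathlib

section
/- Let G be a finite group and let X and Y be finite G-sets. If for every subgroup H of G the fixed-point sets have the same cardinality, |X^H| = |Y^H|, then X and Y are isomorphic as G-sets, i.e., there exists a G-equivariant bijection from X to Y. -/
/-!
Induct on `|X|`. Pick `x₀ ∈ X` whose stabilizer `H` is maximal among stabilizers of points of
`X`. Since `|X^H| > 0`, some `y₀ ∈ Y` has stabilizer containing `H`; running the same argument
back from `stabilizer y₀` to `X` and using maximality shows `stabilizer y₀ = H`. The orbits of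
`x₀` and `y₀` are then both isomorphic to `G ⧸ H`, and fixed-point counts are additive over the
decomposition into an invariant subset and its complement, so the complements of the two orbits
again have equal fixed-point counts and are isomorphic by induction.
-/

open MulAction

def SubMulAction.orbit (G : Type*) {X : Type*} [Monoid G] [MulAction G X] (x : X) :
    SubMulAction G X where
  carrier := MulAction.orbit G x
  smul_mem' g _ hy := mem_orbit_of_mem_orbit g hy

namespace MulAction

def Isomorphic (G X Y : Type*) [SMul G X] [SMul G Y] : Prop :=
  ∃ f : X ≃ Y, ∀ (g : G) (x : X), f (g • x) = g • f x

namespace Isomorphic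

variable {G X Y Z X' Y' : Type*} [SMul G X] [SMul G Y] [SMul G Z] [SMul G X'] [SMul G Y']

theorem symm : Isomorphic G X Y → Isomorphic G Y X
  | ⟨f, hf⟩ => ⟨f.symm, fun g y => f.injective (by simp [hf])⟩

theorem trans : Isomorphic G X Y → Isomorphic G Y Z → Isomorphic G X Z
  | ⟨f, hf⟩, ⟨f', hf'⟩ => ⟨f.trans f', fun g x => by simp [hf, hf']⟩

theorem sum : Isomorphic G X Y → Isomorphic G X' Y' → Isomorphic G (X ⊕ X') (Y ⊕ Y')
  | ⟨f, hf⟩, ⟨f', hf'⟩ => ⟨f.sumCongr f', by rintro g (x | x) <;> simp [hf, hf']⟩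

end Isomorphic

variable {G X Y : Type*} [Group G] [MulAction G X] [MulAction G Y]

theorem isomorphic_quotient_stabilizer (x : X) :
    Isomorphic G (orbit G x) (G ⧸ stabilizer G x) :=
  Isomorphic.symm ⟨(orbitEquivQuotientStabilizer G x).symm,
    fun g q => Subtype.ext (ofQuotientStabilizer_smul G x g q)⟩

theorem isomorphic_orbit_of_stabilizer_eq {x : X} {y : Y}
    (h : stabilizer G x = stabilizer G y) :
    Isomorphic G (SubMulAction.orbit G x) (SubMulAction.orbit G y) :=
  (isomorphic_quotient_stabilizer x).trans (h ▸ (isomorphic_quotient_stabilizer y).symm)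

theorem isomorphic_sum_compl (p : SubMulAction G X) : Isomorphic G (p ⊕ ↥pᶜ) X := by
  classical
  exact ⟨Equiv.sumCompl (· ∈ p), by rintro g (x | x) <;> rfl⟩

theorem Isomorphic.of_sum_compl {p : SubMulAction G X} {q : SubMulAction G Y}
    (h : Isomorphic G p q) (hc : Isomorphic G ↥pᶜ ↥qᶜ) : Isomorphic G X Y :=
  (isomorphic_sum_compl p).symm.trans ((h.sum hc).trans (isomorphic_sum_compl q))

noncomputable def fixedPointCount (H : Subgroup G) (X : Type*) [MulAction G X] : ℕ :=
  Nat.card {x : X // ∀ g ∈ H, g • x = x}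

theorem Isomorphic.fixedPointCount_eq (hXY : Isomorphic G X Y) (H : Subgroup G) :
    fixedPointCount H X = fixedPointCount H Y := by
  obtain ⟨f, hf⟩ := hXY
  exact Nat.card_congr (f.subtypeEquiv fun x => by simp only [← hf, f.apply_eq_iff_eq])

theorem fixedPointCount_sum {X' : Type*} [MulAction G X'] [Finite X] [Finite X']
    (H : Subgroup G) :
    fixedPointCount H (X ⊕ X') = fixedPointCount H X + fixedPointCount H X' := by
  rw [fixedPointCount, Nat.card_congr Equiv.subtypeSum, Nat.card_sum]
  simp [Sum.smul_inl, Sum.smul_inr, fixedPointCount]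

theorem fixedPointCount_eq_add_compl [Finite X] (p : SubMulAction G X) (H : Subgroup G) :
    fixedPointCount H X = fixedPointCount H p + fixedPointCount H ↥pᶜ := by
  rw [← (isomorphic_sum_compl p).fixedPointCount_eq, fixedPointCount_sum]

theorem fixedPointCount_compl_eq [Finite X] [Finite Y] {p : SubMulAction G X}
    {q : SubMulAction G Y} (hpq : Isomorphic G p q)
    (h : ∀ H : Subgroup G, fixedPointCount H X = fixedPointCount H Y) (H : Subgroup G) :
    fixedPointCount H ↥pᶜ = fixedPointCount H ↥qᶜ := by
  have hH := h H
  rw [fixedPointCount_eq_add_compl p, fixedPointCount_eq_add_compl q,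
    hpq.fixedPointCount_eq] at hH
  omega

theorem fixedPointCount_pos_iff [Finite X] (H : Subgroup G) :
    0 < fixedPointCount H X ↔ ∃ x : X, H ≤ stabilizer G x := by
  rw [fixedPointCount, Nat.card_pos_iff, and_iff_left Subtype.finite]
  simp [SetLike.le_def, mem_stabilizer_iff]

theorem exists_le_stabilizer_iff_of_fixedPointCount_eq [Finite X] [Finite Y]
    (h : ∀ H : Subgroup G, fixedPointCount H X = fixedPointCount H Y) (H : Subgroup G) :
    (∃ x : X, H ≤ stabilizer G x) ↔ ∃ y : Y, H ≤ stabilizer G y := by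
  rw [← fixedPointCount_pos_iff, ← fixedPointCount_pos_iff, h]

theorem exists_stabilizer_eq_of_fixedPointCount_eq [Finite X] [Finite Y]
    (h : ∀ H : Subgroup G, fixedPointCount H X = fixedPointCount H Y) {x₀ : X}
    (hx₀ : ∀ x : X, stabilizer G x₀ ≤ stabilizer G x → stabilizer G x ≤ stabilizer G x₀) :
    ∃ y₀ : Y, stabilizer G y₀ = stabilizer G x₀ := by
  obtain ⟨y₀, hxy⟩ := (exists_le_stabilizer_iff_of_fixedPointCount_eq h _).1 ⟨x₀, le_rfl⟩
  obtain ⟨x, hyx⟩ := (exists_le_stabilizer_iff_of_fixedPointCount_eq h _).2 ⟨y₀, le_rfl⟩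
  exact ⟨y₀, le_antisymm (hyx.trans (hx₀ x (hxy.trans hyx))) hxy⟩

theorem isomorphic_of_fixedPointCount_eq [Finite X] [Finite Y]
    (h : ∀ H : Subgroup G, fixedPointCount H X = fixedPointCount H Y) : Isomorphic G X Y := by
  induction hn : Nat.card X using Nat.strong_induction_on generalizing X Y with
  | _ n ih =>
  rcases isEmpty_or_nonempty X with hX | _
  · have : IsEmpty Y := ⟨fun y => by
      obtain ⟨x, -⟩ := (exists_le_stabilizer_iff_of_fixedPointCount_eq h ⊥).2 ⟨y, bot_le⟩
      exact hX.elim x⟩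
    exact ⟨Equiv.equivOfIsEmpty X Y, fun _ x => hX.elim x⟩
  obtain ⟨x₀, -, hx₀⟩ :=
    Set.finite_univ.exists_maximalFor (stabilizer G : X → _) _ Set.univ_nonempty
  obtain ⟨y₀, hy₀⟩ := exists_stabilizer_eq_of_fixedPointCount_eq h fun x => hx₀ (Set.mem_univ x)
  have horbit := isomorphic_orbit_of_stabilizer_eq (G := G) hy₀.symm
  have hcard : Nat.card ↥(SubMulAction.orbit G x₀)ᶜ < n :=
    hn ▸ Finite.card_subtype_lt fun hx => hx (mem_orbit_self x₀)
  exact horbit.of_sum_compl (ih _ hcard (fixedPointCount_compl_eq horbit h) rfl)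

end MulAction

theorem gset_iso_of_card_fixedPoints_eq_general {G X Y : Type*} [Group G]
    [Fintype X] [Fintype Y] [MulAction G X] [MulAction G Y]
    (h : ∀ H : Subgroup G,
      Nat.card {x : X // ∀ g ∈ H, g • x = x} = Nat.card {y : Y // ∀ g ∈ H, g • y = y}) :
    ∃ f : X ≃ Y, ∀ (g : G) (x : X), f (g • x) = g • f x :=
  isomorphic_of_fixedPointCount_eq h

/-- If two finite `G`-sets have, for every subgroup `H` of `G`,
the same number of `H`-fixed points, then they are isomorphic as `G`-sets. -/
theorem gset_iso_of_card_fixedPoints_eq {G X Y : Type*} [Group G] [Fintype G]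
    [Fintype X] [Fintype Y] [MulAction G X] [MulAction G Y]
    (h : ∀ H : Subgroup G,
      Nat.card {x : X // ∀ g ∈ H, g • x = x} = Nat.card {y : Y // ∀ g ∈ H, g • y = y}) :
    ∃ f : X ≃ Y, ∀ (g : G) (x : X), f (g • x) = g • f x :=
  gset_iso_of_card_fixedPoints_eq_general h
end

section
/- Let G be a finite group, X a finite G-set, H a subgroup of G, A a finite set with |A| ≥ 2, a ∈ A, A' = A∖{a}, and N a nonempty set of nonnegative integers. For each i ≥ 1, let O_i be the number of H-orbits of X of cardinality i. Consider functions f : X → (finite words over A') such that the length of f(x) lies in N for every x ∈ X and f is H-invariant, i.e., f(h•x) = f(x) for all h ∈ H and x ∈ X; set deg(f) = Σ_{x∈X} length(f(x)). Then in the ring of formal power series over ℤ: Σ_{n≥0} #{H-invariant f with deg(f) = n}·tⁿ = Π_{i≥1} (Σ_{m∈N} (|A'|·t^i)^m)^{O_i}, where the product is over the finitely many i with O_i ≠ 0 and the inner sum Σ_{m∈N} |A'|^m·t^{im} is a well-defined formal power series. -/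
open scoped Classical

/-! An `H`-invariant function on `X` is the same as a function `g` on the orbit space, and its
degree becomes `∑ ω, |ω| * length (g ω)`. For functions on a finite index set graded by a sum of
per-index weights, the generating function is the product of the per-index generating functions;
for one orbit of size `i` that factor is `∑_{m ∈ N} |A'|^m t^(i m)`. Grouping the orbits by size
produces the exponents `O i`. -/

open PowerSeries MulAction Finset

section WeightedProduct

variable {ι : Type*} [Fintype ι] {W : ι → Type*} (wt : ∀ i, W i → ℕ)
  [∀ i n, Finite {w : W i // wt i w = n}]

theorem natCard_weightedPi_eq_sum_finsuppAntidiag (n : ℕ) :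
    Nat.card {g : ∀ i, W i // ∑ i, wt i (g i) = n} =
      ∑ l ∈ finsuppAntidiag univ n, ∏ i, Nat.card {w : W i // wt i w = l i} := by
  let q : {g : ∀ i, W i // ∑ i, wt i (g i) = n} → finsuppAntidiag (univ : Finset ι) n :=
    fun g => ⟨Finsupp.equivFunOnFinite.symm fun i => wt i (g.1 i), by
      simpa [mem_finsuppAntidiag] using g.2⟩
  have fiber (l : finsuppAntidiag (univ : Finset ι) n) :
      {g // q g = l} ≃ ∀ i, {w : W i // wt i w = (l : ι →₀ ℕ) i} :=
    ((Equiv.subtypeEquivRight fun g => by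
        simp only [q, Subtype.ext_iff, Finsupp.ext_iff, Finsupp.coe_equivFunOnFinite_symm]).trans
      (Equiv.subtypeSubtypeEquivSubtype fun {g} hg => by
        rw [← (mem_finsuppAntidiag.mp l.2).1]
        exact sum_congr rfl fun i _ => hg i)).trans
    Equiv.subtypePiEquivPi
  have (l : finsuppAntidiag (univ : Finset ι) n) : Finite {g // q g = l} :=
    .of_equiv _ (fiber l).symm
  rw [← Nat.card_congr (Equiv.sigmaFiberEquiv q), Nat.card_sigma,
    ← sum_coe_sort (finsuppAntidiag univ n)]
  exact sum_congr rfl fun l _ => by rw [Nat.card_congr (fiber l), Nat.card_pi]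

theorem mk_natCard_weightedPi_eq_prod :
    PowerSeries.mk (fun n => (Nat.card {g : ∀ i, W i // ∑ i, wt i (g i) = n} : ℤ)) =
      ∏ i, PowerSeries.mk fun n => (Nat.card {w : W i // wt i w = n} : ℤ) := by
  ext n
  simp only [coeff_mk, coeff_prod, natCard_weightedPi_eq_sum_finsuppAntidiag]
  push_cast
  rfl

end WeightedProduct

section Words

variable {α : Type*} (N : Set ℕ) {d : ℕ} (hd : 0 < d) (k : ℕ)
include hd

theorem finite_words_length_mul [Finite α] :
    Finite {w : {w : List α // w.length ∈ N} // d * w.1.length = k} := by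
  have : Finite {l : List α | l.length ≤ k} := (List.finite_length_le α k).to_subtype
  refine .of_injective (fun w => (⟨w.1.1, ?_⟩ : {l : List α | l.length ≤ k})) ?_
  · exact (Nat.le_mul_of_pos_left _ hd).trans_eq w.2
  · intro w w' h
    simp only [Subtype.mk.injEq] at h
    exact Subtype.ext (Subtype.ext h)

theorem natCard_words_length_mul [Fintype α] :
    Nat.card {w : {w : List α // w.length ∈ N} // d * w.1.length = k} =
      if d ∣ k ∧ k / d ∈ N then Fintype.card α ^ (k / d) else 0 := by
  split_ifs with h
  · obtain ⟨⟨m, rfl⟩, hm⟩ := h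
    rw [Nat.mul_div_cancel_left _ hd] at hm ⊢
    have e : {w : {w : List α // w.length ∈ N} // d * w.1.length = d * m} ≃ List.Vector α m :=
      { toFun w := ⟨w.1.1, Nat.eq_of_mul_eq_mul_left hd w.2⟩
        invFun v := ⟨⟨v.1, by rwa [v.2]⟩, by rw [v.2]⟩
        left_inv _ := rfl
        right_inv _ := rfl }
    rw [Nat.card_congr e, Nat.card_eq_fintype_card, card_vector]
  · have : IsEmpty {w : {w : List α // w.length ∈ N} // d * w.1.length = k} :=
      ⟨fun ⟨⟨w, hw⟩, hk⟩ => h ⟨⟨_, hk.symm⟩, by rwa [← hk, Nat.mul_div_cancel_left _ hd]⟩⟩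
    exact Nat.card_of_isEmpty

end Words

section Orbits

variable {G X : Type*} [Group G] [MulAction G X] [Fintype X]

theorem sum_comp_orbitRel_mk {M : Type*} [AddCommMonoid M] (F : orbitRel.Quotient G X → M) :
    ∑ x, F (Quotient.mk'' x) = ∑ ω, Nat.card ω.orbit • F ω := by
  rw [← (selfEquivSigmaOrbits' G X).symm.sum_comp, Fintype.sum_sigma]
  refine sum_congr rfl fun ω _ => ?_
  rw [Nat.card_eq_fintype_card, ← card_univ, ← sum_const]
  exact sum_congr rfl fun y _ => congrArg F (orbitRel.Quotient.mem_orbit.mp y.2)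

theorem natCard_orbit_mem_Icc (ω : orbitRel.Quotient G X) :
    Nat.card ω.orbit ∈ Icc 1 (Fintype.card X) := by
  have := ω.nonempty_orbit.to_subtype
  exact mem_Icc.mpr ⟨Nat.card_pos, (Finite.card_subtype_le _).trans_eq Nat.card_eq_fintype_card⟩

def invariantFunEquiv (H : Subgroup G) {β : Type*} (p : β → Prop) (wt : β → ℕ) (n : ℕ) :
    {f : X → β // (∀ x, p (f x)) ∧ (∀ h ∈ H, ∀ x, f (h • x) = f x) ∧ ∑ x, wt (f x) = n} ≃
      {g : orbitRel.Quotient H X → Subtype p // ∑ ω, Nat.card ω.orbit * wt (g ω) = n} where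
  toFun f := ⟨fun ω => Quotient.liftOn' ω (fun x => ⟨f.1 x, f.2.1 x⟩) fun x y hxy => by
      obtain ⟨h, rfl⟩ := hxy
      exact Subtype.ext (f.2.2.1 h h.2 y),
    (sum_comp_orbitRel_mk _).symm.trans f.2.2.2⟩
  invFun g := ⟨fun x => g.1 (Quotient.mk'' x), fun x => (g.1 _).2,
    fun h hh x => congrArg (fun ω => (g.1 ω).1)
      (orbitRel.Quotient.quotient_smul_eq (g := (⟨h, hh⟩ : H)) (a := x)),
    (sum_comp_orbitRel_mk _).trans g.2⟩
  left_inv _ := rfl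
  right_inv g := Subtype.ext <| funext fun ω => by induction ω using Quotient.inductionOn'; rfl

end Orbits

theorem prod_comp_eq_prod_pow_natCard_fiber {ι κ M : Type*} [Fintype ι] [CommMonoid M]
    {s : ι → κ} {S : Finset κ} (hs : ∀ i, s i ∈ S) (F : κ → M) :
    ∏ i, F (s i) = ∏ k ∈ S, F k ^ Nat.card {i // s i = k} := by
  rw [← prod_fiberwise_of_maps_to' (fun i _ => hs i) F]
  exact prod_congr rfl fun k _ => by
    rw [prod_const, Nat.card_eq_fintype_card, Fintype.card_subtype]

theorem invariant_words_generating_function_general {G X : Type*} [Group G]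
    [Fintype X] [MulAction G X] (H : Subgroup G)
    (A : Type*) [Fintype A] (a : A)
    (N : Set ℕ) (O : ℕ → ℕ)
    (hO : ∀ i, O i =
      Nat.card {ω : MulAction.orbitRel.Quotient H X // Nat.card ω.orbit = i}) :
    (PowerSeries.mk fun n =>
        (Nat.card {f : X → List {b : A // b ≠ a} //
          (∀ x, (f x).length ∈ N) ∧ (∀ h ∈ H, ∀ x, f (h • x) = f x) ∧
          (∑ x, (f x).length) = n} : ℤ)) =
      ∏ i ∈ Finset.Icc 1 (Fintype.card X),
        (PowerSeries.mk fun k =>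
            if i ∣ k ∧ k / i ∈ N then
              ((Fintype.card {b : A // b ≠ a} : ℤ)) ^ (k / i)
            else 0) ^ (O i) := by
  have hpos (ω : orbitRel.Quotient H X) : 0 < Nat.card ω.orbit :=
    (mem_Icc.mp (natCard_orbit_mem_Icc ω)).1
  have (ω : orbitRel.Quotient H X) (k : ℕ) :=
    finite_words_length_mul (α := {b : A // b ≠ a}) N (hpos ω) k
  simp_rw [Nat.card_congr (invariantFunEquiv H (fun w => w.length ∈ N) List.length _)]
  rw [mk_natCard_weightedPi_eq_prod
    (W := fun _ : orbitRel.Quotient H X => {w : List {b : A // b ≠ a} // w.length ∈ N})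
    fun ω w => Nat.card ω.orbit * w.1.length]
  simp_rw [hO]
  rw [← prod_comp_eq_prod_pow_natCard_fiber natCard_orbit_mem_Icc]
  refine prod_congr rfl fun ω _ => ?_
  ext k
  rw [coeff_mk, coeff_mk, natCard_words_length_mul N (hpos ω)]
  push_cast
  rfl

/-- Generating function for `H`-invariant functions
`f : X → (words over A' = A ∖ {a})` with all word lengths in `N`, graded by the
total degree `∑ x, length (f x)`:  it equals
`∏_{i ≥ 1} (∑_{m ∈ N} (|A'| t^i)^m)^(O i)` where `O i` is the number of
`H`-orbits of `X` of cardinality `i`. -/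
theorem invariant_words_generating_function {G X : Type*} [Group G] [Fintype G]
    [Fintype X] [MulAction G X] (H : Subgroup G)
    (A : Type*) [Fintype A] (hA : 2 ≤ Fintype.card A) (a : A)
    (N : Set ℕ) (hN : N.Nonempty) (O : ℕ → ℕ)
    (hO : ∀ i, O i =
      Nat.card {ω : MulAction.orbitRel.Quotient H X // Nat.card ω.orbit = i}) :
    (PowerSeries.mk fun n =>
        (Nat.card {f : X → List {b : A // b ≠ a} //
          (∀ x, (f x).length ∈ N) ∧ (∀ h ∈ H, ∀ x, f (h • x) = f x) ∧
          (∑ x, (f x).length) = n} : ℤ)) =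
      ∏ i ∈ Finset.Icc 1 (Fintype.card X),
        (PowerSeries.mk fun k =>
            if i ∣ k ∧ k / i ∈ N then
              ((Fintype.card {b : A // b ≠ a} : ℤ)) ^ (k / i)
            else 0) ^ (O i) :=
  invariant_words_generating_function_general H A a N O hO
end

section
/- For all positive integers k₁, k₂, and n, the necklace polynomials satisfy M(k₁k₂, n) = Σ gcd(i,j)·M(k₁, i)·M(k₂, j), where the sum is over all pairs (i, j) of positive divisors of n with lcm(i, j) = n. -/
/-!
Möbius inversion characterises `d ↦ d · M(k, d)` by `∑_{d ∣ n} d · M(k, d) = kⁿ`. Writing `S(d)` for the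
right-hand side at `d`, grouping the pairs `(i, j)` of divisors of `n` by `lcm(i, j)` and using
`gcd(i, j) · lcm(i, j) = i · j` gives `∑_{d ∣ n} d · S(d) = k₁ⁿ · k₂ⁿ`, so `d ↦ d · S(d)` is characterised
by the same identity for `k₁k₂`.
-/

/-- The necklace polynomial `M(k, n) = (1/n) ∑_{d ∣ n} μ(n/d) k^d`. -/
noncomputable def necklacePoly (k n : ℕ) : ℚ :=
  (1 / (n : ℚ)) * ∑ d ∈ n.divisors, (ArithmeticFunction.moebius (n / d) : ℚ) * (k : ℚ) ^ d

open Finset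

theorem ArithmeticFunction.eq_of_sum_divisors_eq {R : Type*} [AddCommGroup R] {f g : ℕ → R}
    (h : ∀ n > 0, ∑ d ∈ n.divisors, f d = ∑ d ∈ n.divisors, g d) {n : ℕ} (hn : 0 < n) :
    f n = g n := by
  have hf := (sum_eq_iff_sum_smul_moebius_eq.mp h) n hn
  have hg := (sum_eq_iff_sum_smul_moebius_eq (f := g).mp fun _ _ => rfl) n hn
  exact hf.symm.trans hg

theorem sum_divisors_mul_necklacePoly (k : ℕ) {n : ℕ} (hn : 0 < n) :
    ∑ d ∈ n.divisors, (d : ℚ) * necklacePoly k d = (k : ℚ) ^ n := by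
  refine ArithmeticFunction.sum_eq_iff_sum_smul_moebius_eq.mpr (fun n hn => ?_) n hn
  have hn' : (n : ℚ) ≠ 0 := by exact_mod_cast hn.ne'
  rw [Nat.sum_divisorsAntidiagonal' (fun a b => ArithmeticFunction.moebius a • (k : ℚ) ^ b),
    necklacePoly, ← mul_assoc, mul_one_div_cancel hn', one_mul]
  simp only [zsmul_eq_mul]

def lcmPairs (n : ℕ) : Finset (ℕ × ℕ) :=
  (n.divisors ×ˢ n.divisors).filter fun p => Nat.lcm p.1 p.2 = n

theorem sum_divisors_sum_lcmPairs {M : Type*} [AddCommMonoid M] {n : ℕ} (hn : n ≠ 0)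
    (F : ℕ × ℕ → M) :
    ∑ d ∈ n.divisors, ∑ p ∈ lcmPairs d, F p = ∑ p ∈ n.divisors ×ˢ n.divisors, F p := by
  have hmaps : ∀ p ∈ n.divisors ×ˢ n.divisors, Nat.lcm p.1 p.2 ∈ n.divisors := by
    intro p hp
    simp only [mem_product, Nat.mem_divisors] at hp
    exact Nat.mem_divisors.mpr ⟨Nat.lcm_dvd hp.1.1 hp.2.1, hn⟩
  rw [← sum_fiberwise_of_maps_to hmaps]
  refine sum_congr rfl fun d hd => sum_congr ?_ fun _ _ => rfl
  obtain ⟨hdn, -⟩ := Nat.mem_divisors.mp hd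
  have hd0 : d ≠ 0 := ne_zero_of_dvd_ne_zero hn hdn
  ext ⟨i, j⟩
  simp only [lcmPairs, mem_filter, mem_product, Nat.mem_divisors]
  constructor
  · rintro ⟨⟨⟨hi, -⟩, ⟨hj, -⟩⟩, rfl⟩
    exact ⟨⟨⟨hi.trans hdn, hn⟩, ⟨hj.trans hdn, hn⟩⟩, rfl⟩
  · rintro ⟨-, rfl⟩
    exact ⟨⟨⟨Nat.dvd_lcm_left i j, hd0⟩, ⟨Nat.dvd_lcm_right i j, hd0⟩⟩, rfl⟩

theorem mul_sum_lcmPairs_gcd_mul {R : Type*} [CommSemiring R] (f g : ℕ → R) (d : ℕ) :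
    (d : R) * ∑ p ∈ lcmPairs d, (Nat.gcd p.1 p.2 : R) * f p.1 * g p.2 =
      ∑ p ∈ lcmPairs d, ((p.1 : R) * f p.1) * ((p.2 : R) * g p.2) := by
  rw [mul_sum]
  refine sum_congr rfl fun p hp => ?_
  have hgl : (Nat.gcd p.1 p.2 : R) * d = p.1 * p.2 := by
    rw [← (mem_filter.mp hp).2]
    exact_mod_cast congrArg (Nat.cast : ℕ → R) (Nat.gcd_mul_lcm p.1 p.2)
  calc (d : R) * ((Nat.gcd p.1 p.2 : R) * f p.1 * g p.2)
      = (Nat.gcd p.1 p.2 : R) * d * (f p.1 * g p.2) := by ring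
    _ = ((p.1 : R) * f p.1) * ((p.2 : R) * g p.2) := by rw [hgl]; ring

theorem sum_divisors_mul_sum_lcmPairs_gcd_mul {R : Type*} [CommSemiring R] (f g : ℕ → R)
    {n : ℕ} (hn : n ≠ 0) :
    ∑ d ∈ n.divisors, (d : R) * ∑ p ∈ lcmPairs d, (Nat.gcd p.1 p.2 : R) * f p.1 * g p.2 =
      (∑ i ∈ n.divisors, (i : R) * f i) * ∑ j ∈ n.divisors, (j : R) * g j := by
  simp only [mul_sum_lcmPairs_gcd_mul, sum_divisors_sum_lcmPairs hn, sum_mul_sum, sum_product]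

theorem necklacePoly_mul_general (k₁ k₂ n : ℕ) (hn : 0 < n) :
    necklacePoly (k₁ * k₂) n =
      ∑ p ∈ (n.divisors ×ˢ n.divisors).filter (fun p => Nat.lcm p.1 p.2 = n),
        (Nat.gcd p.1 p.2 : ℚ) * necklacePoly k₁ p.1 * necklacePoly k₂ p.2 := by
  have hsum : ∀ m > 0, ∑ d ∈ m.divisors, ((d : ℕ) : ℚ) * necklacePoly (k₁ * k₂) d =
      ∑ d ∈ m.divisors, ((d : ℕ) : ℚ) * ∑ p ∈ lcmPairs d,
        (Nat.gcd p.1 p.2 : ℚ) * necklacePoly k₁ p.1 * necklacePoly k₂ p.2 := by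
    intro m hm
    rw [sum_divisors_mul_sum_lcmPairs_gcd_mul _ _ hm.ne', sum_divisors_mul_necklacePoly _ hm,
      sum_divisors_mul_necklacePoly _ hm, sum_divisors_mul_necklacePoly _ hm, Nat.cast_mul, mul_pow]
  have hn' : (n : ℚ) ≠ 0 := by exact_mod_cast hn.ne'
  exact mul_left_cancel₀ hn' (ArithmeticFunction.eq_of_sum_divisors_eq hsum hn)

/-- `M(k₁k₂, n) = ∑_{lcm(i,j) = n} gcd(i,j) M(k₁, i) M(k₂, j)`,
the sum over pairs of divisors `(i, j)` of `n` with `lcm(i, j) = n`. -/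
theorem necklacePoly_mul (k₁ k₂ n : ℕ) (hk₁ : 0 < k₁) (hk₂ : 0 < k₂) (hn : 0 < n) :
    necklacePoly (k₁ * k₂) n =
      ∑ p ∈ (n.divisors ×ˢ n.divisors).filter (fun p => Nat.lcm p.1 p.2 = n),
        (Nat.gcd p.1 p.2 : ℚ) * necklacePoly k₁ p.1 * necklacePoly k₂ p.2 :=
  necklacePoly_mul_general k₁ k₂ n hn
end

section
/- For all positive integers k, n, and r, the necklace polynomials satisfy M(k^r, n) = Σ (j/n)·M(k, j), where the sum is over all positive integers j with lcm(j, r) = n·r (each such j divides n·r and is divisible by n). -/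
open Finset ArithmeticFunction in
lemma mulM (k : ℕ) (n : ℕ) (hn : 0 < n) :
    ∑ x ∈ n.divisorsAntidiagonal, (moebius x.1 : ℚ) * (k : ℚ) ^ x.2
      = (n : ℚ) * necklacePoly k n := by
  rw [Nat.sum_divisorsAntidiagonal' (f := fun a b => (moebius a : ℚ) * (k:ℚ)^b),
    necklacePoly]
  field_simp

lemma lemA (k : ℕ) : ∀ m > 0, ∑ j ∈ m.divisors, (Nat.cast j : ℚ) * necklacePoly k j = (k : ℚ) ^ m := by
  refine ArithmeticFunction.sum_eq_iff_sum_mul_moebius_eq.mpr ?_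
  intro n hn
  exact mulM k n hn

lemma fiberEq (n r : ℕ) (hn : 0 < n) (hr : 0 < r) (f : ℕ → ℚ) :
    ∑ e ∈ n.divisors, ∑ j ∈ (e * r).divisors.filter (fun j => Nat.lcm j r = e * r), f j
      = ∑ j ∈ (n * r).divisors, f j := by
  rw [← Finset.sum_fiberwise_of_maps_to (g := fun j => Nat.lcm j r / r)
      (t := n.divisors) ?_ f]
  · refine Finset.sum_congr rfl fun e he => ?_
    have hed : e ∣ n := (Nat.mem_divisors.mp he).1
    have hepos : 0 < e := Nat.pos_of_mem_divisors he
    congr 1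
    ext j
    simp only [Finset.mem_filter, Nat.mem_divisors]
    constructor
    · rintro ⟨⟨hj, _⟩, hl⟩
      refine ⟨⟨hj.trans (mul_dvd_mul_right hed r), by positivity⟩, ?_⟩
      rw [hl, Nat.mul_div_cancel e hr]
    · rintro ⟨⟨hj, _⟩, hl⟩
      obtain ⟨c, hc⟩ := Nat.dvd_lcm_right j r
      rw [hc, Nat.mul_div_cancel_left c hr] at hl
      have hlcm : Nat.lcm j r = e * r := by rw [hc, hl, mul_comm]
      exact ⟨⟨(Nat.dvd_lcm_left j r).trans hlcm.dvd, by positivity⟩, hlcm⟩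
  · intro j hj
    obtain ⟨hjd, -⟩ := Nat.mem_divisors.mp hj
    obtain ⟨c, hc⟩ := Nat.dvd_lcm_right j r
    have hlnr : Nat.lcm j r ∣ n * r := Nat.lcm_dvd hjd (dvd_mul_left r n)
    show Nat.lcm j r / r ∈ n.divisors
    rw [hc, Nat.mul_div_cancel_left c hr]
    refine Nat.mem_divisors.mpr ⟨?_, hn.ne'⟩
    have : r * c ∣ r * n := by rw [← hc]; rwa [mul_comm n r] at hlnr
    exact (mul_dvd_mul_iff_left hr.ne').mp this

/-- `M(k^r, n) = ∑_{lcm(j,r) = n·r} (j/n) M(k, j)`, the sum over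
positive integers `j` with `lcm(j, r) = n·r` (all such `j` divide `n·r`). -/
theorem necklacePoly_pow (k n r : ℕ) (hk : 0 < k) (hn : 0 < n) (hr : 0 < r) :
    necklacePoly (k ^ r) n =
      ∑ j ∈ (n * r).divisors.filter (fun j => Nat.lcm j r = n * r),
        ((j : ℚ) / (n : ℚ)) * necklacePoly k j := by
  set G : ℕ → ℚ := fun e =>
    ∑ j ∈ (e * r).divisors.filter (fun j => Nat.lcm j r = e * r),
      (Nat.cast j : ℚ) * necklacePoly k j with hG
  set g : ℕ → ℚ := fun m => (k : ℚ) ^ (m * r) with hg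
  have H1 : ∀ m > 0, ∑ e ∈ m.divisors, (Nat.cast e : ℚ) * necklacePoly (k ^ r) e = g m := by
    intro m hm
    rw [lemA (k ^ r) m hm, hg]
    push_cast
    rw [← pow_mul, mul_comm r m]
  have H2 : ∀ m > 0, ∑ e ∈ m.divisors, G e = g m := by
    intro m hm
    rw [hG]
    simp only
    rw [fiberEq m r hm hr, lemA k (m * r) (by positivity)]
  have key : (Nat.cast n : ℚ) * necklacePoly (k ^ r) n = G n := by
    have e1 := ArithmeticFunction.sum_eq_iff_sum_mul_moebius_eq.mp H1 n hn
    have e2 := ArithmeticFunction.sum_eq_iff_sum_mul_moebius_eq.mp H2 n hn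
    rw [← e1, ← e2]
  have hn0 : (n : ℚ) ≠ 0 := Nat.cast_ne_zero.mpr hn.ne'
  have : necklacePoly (k ^ r) n = (1 / (n : ℚ)) * G n := by
    rw [← key]; field_simp
  rw [this, hG]
  simp only
  rw [Finset.mul_sum]
  refine Finset.sum_congr rfl fun j hj => ?_
  field_simp
end

section
/- Let n ≥ 1, let D_n be the dihedral group of order 2n, and let A be a finite set with k = |A| ≥ 2. Let D_n act on itself by left multiplication (this models the set of vertices of a regular n-prism), and act on colorings f : D_n → A by (g•f)(x) = f(g⁻¹x). Then the number of orbits of colorings that are free (i.e., have cardinality 2n, equivalently trivial point stabilizers) equals (1/2)·Σ_{d∣n} μ(n/d)·((1/n)·k^{2d} − k^d), where μ is the Möbius function. Equivalently, this number is (1/2)·(M(k², n) − n·M(k, n)), where M(k,m) = (1/m)·Σ_{d∣m} μ(m/d)·k^d. -/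
/-!
Reading a colouring `f` of `D_n` as the necklace `i ↦ (f (r i), f (s r^{-i}))` over `A × A`
turns the rotations into cyclic shifts, so by Möbius inversion over exact periods the colourings
fixed by no nontrivial rotation number `∑_{d ∣ n} μ(n/d) k^{2d}`. Such a colouring is either free
or fixed by exactly one reflection `s r^j`, since two reflections compose to a rotation; in the
second case it is determined by its values on the rotations, an aperiodic necklace over `A`, so
there are `n ∑_{d ∣ n} μ(n/d) k^d` of those. The free colourings fill the free orbits, `2n` each.
-/

/-- The action of the dihedral group `D_n` on colorings `f : D_n → A` of the
vertices of a regular `n`-prism (modelled by `D_n` acting on itself by left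
multiplication): `(g • f) x = f (g⁻¹ * x)`. -/
instance prismColoringAction (n : ℕ) (A : Type*) :
    MulAction (DihedralGroup n) (DihedralGroup n → A) where
  smul g f := fun x => f (g⁻¹ * x)
  one_smul f := by funext x; show f (1⁻¹ * x) = f x; rw [inv_one, one_mul]
  mul_smul a b f := by
    funext x; show f ((a * b)⁻¹ * x) = f (b⁻¹ * (a⁻¹ * x))
    rw [mul_inv_rev, mul_assoc]


open Function
open scoped ArithmeticFunction.Moebius

namespace MulAction

variable {G X : Type*} [Group G] [MulAction G X]

theorem card_orbit_eq_card_iff_stabilizer_eq_bot [Finite G] (x : X) :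
    Nat.card (orbit G x) = Nat.card G ↔ stabilizer G x = ⊥ := by
  have : Finite (orbit G x) := Set.finite_range _ |>.to_subtype
  have : Nonempty (orbit G x) := ⟨⟨x, mem_orbit_self x⟩⟩
  rw [← Subgroup.card_eq_one, ← (stabilizer G x).card_mul_index, index_stabilizer,
    ← Nat.card_coe_set_eq, eq_comm, mul_eq_right₀ Nat.card_pos.ne']

theorem card_subtype_card_orbit_eq_mul [Finite X] (m : ℕ) :
    Nat.card {x : X // Nat.card (orbit G x) = m} =
      m * Nat.card {ω : orbitRel.Quotient G X // Nat.card ω.orbit = m} := by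
  classical
  have := Fintype.ofFinite {ω : orbitRel.Quotient G X // Nat.card ω.orbit = m}
  rw [← Nat.card_congr (Equiv.sigmaSubtypeFiberEquivSubtype
    (Quotient.mk'' : X → orbitRel.Quotient G X) (p := fun x => Nat.card (orbit G x) = m)
    (q := fun ω : orbitRel.Quotient G X => Nat.card ω.orbit = m) fun _ => Iff.rfl), Nat.card_sigma]
  have hfiber (ω : {ω : orbitRel.Quotient G X // Nat.card ω.orbit = m}) :
      Nat.card {x : X // Quotient.mk'' x = ω.1} = m := by
    obtain ⟨ω, rfl⟩ := ω
    exact Nat.card_congr (Equiv.subtypeEquivRight fun _ => orbitRel.Quotient.mem_orbit.symm)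
  simp only [hfiber, Finset.sum_const, Finset.card_univ, Nat.card_eq_fintype_card, smul_eq_mul,
    mul_comm]

theorem card_subtype_stabilizer_eq_bot [Finite G] [Finite X] :
    Nat.card {x : X // stabilizer G x = ⊥} =
      Nat.card G * Nat.card {ω : orbitRel.Quotient G X // Nat.card ω.orbit = Nat.card G} := by
  rw [← card_subtype_card_orbit_eq_mul]
  exact Nat.card_congr (Equiv.subtypeEquivRight fun x =>
    (card_orbit_eq_card_iff_stabilizer_eq_bot x).symm)

end MulAction

theorem Function.card_minimalPeriod_eq_sum_moebius {α R : Type*} [Finite α] [Ring R]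
    (σ : α → α) {n : ℕ} (hn : 0 < n) :
    (Nat.card {x // minimalPeriod σ x = n} : R) =
      ∑ d ∈ n.divisors, (μ (n / d) : R) * Nat.card {x // IsPeriodicPt σ d x} := by
  classical
  have := Fintype.ofFinite α
  have hsum : ∀ d > 0, ∑ e ∈ d.divisors, (Nat.card {x // minimalPeriod σ x = e} : R) =
      Nat.card {x // IsPeriodicPt σ d x} := by
    intro d hd
    simp only [Nat.card_eq_fintype_card, Fintype.card_subtype]
    rw [← Nat.cast_sum, Finset.sum_card_fiberwise_eq_card_filter]
    congr 2
    ext x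
    simp [Nat.mem_divisors, isPeriodicPt_iff_minimalPeriod_dvd, hd.ne']
  rw [← ArithmeticFunction.sum_eq_iff_sum_mul_moebius_eq.mp hsum n hn]
  exact Nat.sum_divisorsAntidiagonal' fun a b => (μ a : R) * Nat.card {x // IsPeriodicPt σ b x}

namespace Necklace

variable {n : ℕ} {C : Type*}

def rotate (f : ZMod n → C) : ZMod n → C := fun i => f (i + 1)

theorem rotate_iterate (m : ℕ) (f : ZMod n → C) : rotate^[m] f = fun i => f (i + m) := by
  induction m with
  | zero => simp
  | succ m ih =>
    rw [iterate_succ_apply', ih]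
    funext i
    simp only [rotate, Nat.cast_succ, add_assoc, add_comm (1 : ZMod n)]

theorem isPeriodicPt_rotate_iff {m : ℕ} {f : ZMod n → C} :
    IsPeriodicPt rotate m f ↔ Periodic f (m : ZMod n) := by
  rw [IsPeriodicPt, IsFixedPt, rotate_iterate, funext_iff]
  rfl

theorem periodic_iff_exists_comp_castHom [NeZero n] {d : ℕ} (hd : d ∣ n) {f : ZMod n → C} :
    Periodic f (d : ZMod n) ↔ ∃ g : ZMod d → C, g ∘ ZMod.castHom hd (ZMod d) = f := by
  constructor
  · intro hf
    refine ⟨fun j => f j.val, funext fun i => ?_⟩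
    obtain ⟨a, rfl⟩ : ∃ a : ℕ, (a : ZMod n) = i := ⟨i.val, ZMod.natCast_zmod_val i⟩
    have hdiv : ((a % d : ℕ) : ZMod n) + ((a / d : ℕ) : ZMod n) * d = a := by
      conv_rhs => rw [← Nat.mod_add_div a d]
      push_cast
      ring
    change f ((ZMod.castHom hd (ZMod d) a).val : ZMod n) = f a
    rw [map_natCast, ZMod.val_natCast, ← hdiv]
    exact (hf.nat_mul (a / d) _).symm
  · rintro ⟨g, rfl⟩ i
    simp only [comp_apply, map_add, map_natCast, ZMod.natCast_self, add_zero]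

theorem card_periodic [NeZero n] {d : ℕ} (hd : d ∣ n) :
    Nat.card {f : ZMod n → C // Periodic f (d : ZMod n)} = Nat.card C ^ d := by
  have : NeZero d := ⟨fun h => NeZero.ne n (Nat.eq_zero_of_zero_dvd (h ▸ hd))⟩
  have hinj : Injective fun g : ZMod d → C => g ∘ ZMod.castHom hd (ZMod d) :=
    (ZMod.castHom_surjective hd).injective_comp_right
  calc Nat.card {f : ZMod n → C // Periodic f (d : ZMod n)}
      = Nat.card (Set.range fun g : ZMod d → C => g ∘ ZMod.castHom hd (ZMod d)) :=
        Nat.card_congr (Equiv.subtypeEquivRight fun _ => periodic_iff_exists_comp_castHom hd)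
    _ = Nat.card C ^ d := by rw [Nat.card_range_of_injective hinj, Nat.card_fun, Nat.card_zmod]

def IsAperiodic (f : ZMod n → C) : Prop := ∀ j : ZMod n, Periodic f j → j = 0

theorem isAperiodic_iff_minimalPeriod_rotate [NeZero n] {f : ZMod n → C} :
    IsAperiodic f ↔ minimalPeriod rotate f = n := by
  have hdvd : minimalPeriod rotate f ∣ n := by
    rw [← isPeriodicPt_iff_minimalPeriod_dvd, isPeriodicPt_rotate_iff, ZMod.natCast_self]
    exact fun _ => by rw [add_zero]
  have hdvd_iff : IsAperiodic f ↔ ∀ m : ℕ, minimalPeriod rotate f ∣ m → n ∣ m := by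
    refine ⟨fun h m hm => ?_, fun h j hj => ?_⟩
    · rw [← ZMod.natCast_eq_zero_iff]
      exact h m (isPeriodicPt_rotate_iff.mp (isPeriodicPt_iff_minimalPeriod_dvd.mpr hm))
    · rw [← ZMod.natCast_zmod_val j] at hj ⊢
      rw [ZMod.natCast_eq_zero_iff]
      exact h _ (isPeriodicPt_iff_minimalPeriod_dvd.mp (isPeriodicPt_rotate_iff.mpr hj))
  rw [hdvd_iff]
  exact ⟨fun h => Nat.dvd_antisymm hdvd (h _ dvd_rfl), fun h m hm => h ▸ hm⟩

theorem card_isAperiodic {R : Type*} [Ring R] [NeZero n] [Finite C] :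
    (Nat.card {f : ZMod n → C // IsAperiodic f} : R) =
      ∑ d ∈ n.divisors, (μ (n / d) : R) * (Nat.card C : R) ^ d := by
  simp only [isAperiodic_iff_minimalPeriod_rotate]
  rw [card_minimalPeriod_eq_sum_moebius _ (NeZero.pos n)]
  refine Finset.sum_congr rfl fun d hd => ?_
  simp only [isPeriodicPt_rotate_iff, card_periodic (Nat.dvd_of_mem_divisors hd), Nat.cast_pow]

end Necklace

namespace PrismColoring

open DihedralGroup MulAction Necklace

variable {n : ℕ} {A : Type*}

theorem smul_apply (g x : DihedralGroup n) (f : DihedralGroup n → A) :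
    (g • f) x = f (g⁻¹ * x) := rfl

-- Indexing the reflections by `sr (-i)` makes `r j` shift both coordinates the same way.
def toNecklace : (DihedralGroup n → A) ≃ (ZMod n → A × A) where
  toFun f i := (f (r i), f (sr (-i)))
  invFun g
    | r i => (g i).1
    | sr i => (g (-i)).2
  left_inv f := by
    funext x
    cases x with
    | r i => rfl
    | sr i => simp
  right_inv g := by
    funext i
    simp

theorem r_smul_eq_self_iff {j : ZMod n} {f : DihedralGroup n → A} :
    r j • f = f ↔ Periodic (toNecklace f) j := by
  rw [smul_eq_iff_eq_inv_smul, funext_iff]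
  simp only [smul_apply, inv_inv]
  constructor
  · intro h i
    refine Prod.ext ?_ ?_
    · change f (r (i + j)) = f (r i)
      rw [h (r i), r_mul_r, add_comm]
    · change f (sr (-(i + j))) = f (sr (-i))
      rw [h (sr (-i)), r_mul_sr, neg_add']
  · intro h x
    cases x with
    | r i =>
      rw [r_mul_r, add_comm]
      exact (congrArg Prod.fst (h i)).symm
    | sr i =>
      have := congrArg Prod.snd (h (-i))
      simp only [toNecklace, Equiv.coe_fn_mk, neg_add_rev, neg_neg] at this
      rw [r_mul_sr, ← this, sub_eq_neg_add]

theorem sr_smul_eq_self_iff {j : ZMod n} {f : DihedralGroup n → A} :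
    sr j • f = f ↔ ∀ i, f (sr i) = f (r (i - j)) := by
  rw [smul_eq_iff_eq_inv_smul, funext_iff]
  simp only [smul_apply, inv_inv]
  constructor
  · intro h i
    rw [h (sr i), sr_mul_sr]
  · intro h x
    cases x with
    | r i => rw [sr_mul_r, h, add_sub_cancel_left]
    | sr i => rw [sr_mul_sr, h]

def IsRotationFree (f : DihedralGroup n → A) : Prop := ∀ j : ZMod n, r j • f = f → j = 0

theorem isRotationFree_iff_isAperiodic {f : DihedralGroup n → A} :
    IsRotationFree f ↔ IsAperiodic (toNecklace f) :=
  forall_congr' fun _ => imp_congr_left r_smul_eq_self_iff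

theorem isRotationFree_iff_of_sr_smul_eq_self {j : ZMod n} {f : DihedralGroup n → A}
    (hf : sr j • f = f) : IsRotationFree f ↔ IsAperiodic fun i => f (r i) := by
  rw [isRotationFree_iff_isAperiodic]
  refine forall_congr' fun p => imp_congr_left ⟨fun h i => congrArg Prod.fst (h i), fun h i => ?_⟩
  rw [sr_smul_eq_self_iff] at hf
  refine Prod.ext (h i) ?_
  change f (sr (-(i + p))) = f (sr (-i))
  rw [hf, hf, show -(i + p) - j = -i - j - p by ring]
  exact h.sub_eq _

theorem eq_of_sr_smul_eq_self {f : DihedralGroup n → A} (hf : IsRotationFree f) {j j' : ZMod n}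
    (hj : sr j • f = f) (hj' : sr j' • f = f) : j = j' := by
  have : r (j' - j) • f = f := by rw [← sr_mul_sr, mul_smul, hj', hj]
  exact (sub_eq_zero.mp (hf _ this)).symm

theorem stabilizer_eq_bot_iff {f : DihedralGroup n → A} :
    stabilizer (DihedralGroup n) f = ⊥ ↔ IsRotationFree f ∧ ∀ j : ZMod n, sr j • f ≠ f := by
  rw [Subgroup.eq_bot_iff_forall]
  constructor
  · intro h
    refine ⟨fun j hj => r.inj ?_, fun j hj => ?_⟩
    · rw [h (r j) hj, one_def]
    · cases (h (sr j) hj).trans one_def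
  · rintro ⟨hrot, hsr⟩ (j | j) hj
    · rw [hrot j hj, r_zero]
    · exact absurd hj (hsr j)

def ofReflectionFixed (j : ZMod n) (h : ZMod n → A) : DihedralGroup n → A
  | r i => h i
  | sr i => h (i - j)

def reflectionFixedEquiv (j : ZMod n) :
    {f : DihedralGroup n → A // IsRotationFree f ∧ sr j • f = f} ≃
      {h : ZMod n → A // IsAperiodic h} where
  toFun f := ⟨fun i => f.1 (r i), (isRotationFree_iff_of_sr_smul_eq_self f.2.2).mp f.2.1⟩
  invFun h := ⟨ofReflectionFixed j h.1, by
    have hfix : sr j • ofReflectionFixed j h.1 = _ := sr_smul_eq_self_iff.mpr fun i => rfl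
    exact ⟨(isRotationFree_iff_of_sr_smul_eq_self hfix).mpr h.2, hfix⟩⟩
  left_inv f := by
    ext x
    cases x with
    | r i => rfl
    | sr i => exact (sr_smul_eq_self_iff.mp f.2.2 i).symm
  right_inv h := rfl

theorem card_isRotationFree_and_exists_sr [NeZero n] [Finite A] :
    Nat.card {f : DihedralGroup n → A // IsRotationFree f ∧ ∃ j : ZMod n, sr j • f = f} =
      n * Nat.card {h : ZMod n → A // IsAperiodic h} := by
  have hbij : Bijective fun p : Σ j : ZMod n, {f : DihedralGroup n → A //
      IsRotationFree f ∧ sr j • f = f} =>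
      (⟨p.2.1, p.2.2.1, p.1, p.2.2.2⟩ : {f // IsRotationFree f ∧ ∃ j : ZMod n, sr j • f = f}) := by
    refine ⟨?_, fun f => ⟨⟨f.2.2.choose, f.1, f.2.1, f.2.2.choose_spec⟩, rfl⟩⟩
    intro ⟨j, f, hf, hj⟩ ⟨j', f', _, hj'⟩ heq
    obtain rfl : f = f' := congrArg Subtype.val heq
    obtain rfl := eq_of_sr_smul_eq_self hf hj hj'
    rfl
  rw [← Nat.card_congr (Equiv.ofBijective _ hbij), Nat.card_sigma]
  simp only [Nat.card_congr (reflectionFixedEquiv _), Finset.sum_const, Finset.card_univ,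
    ZMod.card, smul_eq_mul]

theorem card_isRotationFree [NeZero n] [Finite A] :
    Nat.card {f : DihedralGroup n → A // IsRotationFree f} =
      Nat.card {f : DihedralGroup n → A // stabilizer (DihedralGroup n) f = ⊥} +
        n * Nat.card {h : ZMod n → A // IsAperiodic h} := by
  classical
  rw [← card_isRotationFree_and_exists_sr, ← Nat.card_sum]
  refine Nat.card_congr ((Equiv.subtypeEquivRight fun f => ?_).trans
    (subtypeOrEquiv _ _ ?_))
  · rw [stabilizer_eq_bot_iff]
    simp only [ne_eq, ← not_exists]
    tauto
  · simp only [Pi.disjoint_iff, Prop.disjoint_iff, stabilizer_eq_bot_iff]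
    rintro f ⟨⟨-, hsr⟩, -, j, hj⟩
    exact hsr j hj

theorem card_isAperiodic_prod [NeZero n] [Finite A] :
    Nat.card {g : ZMod n → A × A // IsAperiodic g} =
      2 * n * Nat.card {ω : orbitRel.Quotient (DihedralGroup n) (DihedralGroup n → A) //
          Nat.card ω.orbit = 2 * n} +
        n * Nat.card {h : ZMod n → A // IsAperiodic h} := by
  rw [← nat_card, ← card_subtype_stabilizer_eq_bot, ← card_isRotationFree]
  exact (Nat.card_congr (Equiv.subtypeEquiv toNecklace fun _ => isRotationFree_iff_isAperiodic)).symm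

end PrismColoring

theorem card_free_orbits_prism_general (n : ℕ) (hn : 1 ≤ n) (A : Type*) [Fintype A] :
    (Nat.card {ω : MulAction.orbitRel.Quotient (DihedralGroup n)
        (DihedralGroup n → A) // Nat.card ω.orbit = 2 * n} : ℚ) =
      (1 / 2) * ∑ d ∈ n.divisors, (ArithmeticFunction.moebius (n / d) : ℚ) *
        ((1 / (n : ℚ)) * (Fintype.card A : ℚ) ^ (2 * d) - (Fintype.card A : ℚ) ^ d) := by
  have : NeZero n := ⟨by omega⟩
  have hcount := congrArg (Nat.cast : ℕ → ℚ) (PrismColoring.card_isAperiodic_prod (n := n) (A := A))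
  push_cast at hcount
  rw [Necklace.card_isAperiodic, Necklace.card_isAperiodic, Nat.card_prod,
    Nat.card_eq_fintype_card, Nat.cast_mul] at hcount
  simp only [mul_sub, Finset.sum_sub_distrib, mul_left_comm _ (1 / (n : ℚ)), ← Finset.mul_sum,
    pow_mul, sq]
  rw [hcount]
  have hn0 : (n : ℚ) ≠ 0 := NeZero.ne _
  field_simp
  ring

/-- The number of free orbits (orbits of cardinality `2n`,
i.e. primitive colorings up to symmetry) of `D_n` acting on colorings of the
vertices of a regular `n`-prism with `k = |A| ≥ 2` colors is
`(1/2) ∑_{d ∣ n} μ(n/d) ((1/n) k^{2d} - k^d)`. -/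
theorem card_free_orbits_prism (n : ℕ) (hn : 1 ≤ n) (A : Type*) [Fintype A]
    (hA : 2 ≤ Fintype.card A) :
    (Nat.card {ω : MulAction.orbitRel.Quotient (DihedralGroup n)
        (DihedralGroup n → A) // Nat.card ω.orbit = 2 * n} : ℚ) =
      (1 / 2) * ∑ d ∈ n.divisors, (ArithmeticFunction.moebius (n / d) : ℚ) *
        ((1 / (n : ℚ)) * (Fintype.card A : ℚ) ^ (2 * d) - (Fintype.card A : ℚ) ^ d) :=
  card_free_orbits_prism_general n hn A
end
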